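/- arXiv:2508.04376 — 2 statements merged into one kernel-verified Lean document; each statement's English description precedes it below -/
import Mathlib

section
/- If M ⊆ ℓ²(ℕ, ℂ) is a closed linear subspace with M ≠ {0} and M ≠ ℓ² which is invariant under the Cesàro operator C (i.e., C(M) ⊆ M), then the spectrum of the restriction C|_M equals the spectrum of C: σ(C|_M) = {z ∈ ℂ : |z − 1| ≤ 1}. -/
/-!
Hardy's summation by parts gives `‖C a - a‖ ≤ ‖a‖`, so `σ(C|_M)` lies in the closed disc
`|z - 1| ≤ 1`. Conversely, for `Re w > 1/2` the sequence `e_w n = ∏_{j<n} (1 - w/(j+1))` decays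
like `n^(-Re w)`, hence lies in `ℓ²`, and `w ⟪ē_w, C x⟫ = ⟪ē_w, x⟫`: `ē_w` is an eigenvector
of `C*` for the eigenvalue `conj w⁻¹`, and `w ↦ w⁻¹` maps the half plane `Re w > 1/2` onto the
open disc. If `w⁻¹` were in the resolvent set of `C|_M`, then `M = (w⁻¹ - C) M ⊥ ē_w`. The pairing
`w ↦ ∑ e_w n * x n` is holomorphic on the half plane, so for `x ∈ M` it would vanish identically,
in particular at every `w = m + 1`, where `e_w` is supported on `[0, m]` with nonzero last
entry; this forces `x = 0`. Hence the open disc, and so its closure, lies in the spectrum.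
-/

/-- `C` is the Cesàro operator on `ℓ²(ℕ, ℂ)`: `(C a)ₙ = (1/(n+1)) ∑_{k=0}^{n} a_k`. -/
def IsCesaro (C : lp (fun _ : ℕ => ℂ) 2 →L[ℂ] lp (fun _ : ℕ => ℂ) 2) : Prop :=
  ∀ (a : lp (fun _ : ℕ => ℂ) 2) (n : ℕ),
    C a n = (∑ k ∈ Finset.range (n + 1), a k) / (n + 1)

/-- Restriction of an operator to an invariant subspace. -/
noncomputable def restrictOp {X : Type*} [NormedAddCommGroup X] [NormedSpace ℂ X]
    (T : X →L[ℂ] X) (M : Submodule ℂ X) (h : ∀ y ∈ M, T y ∈ M) : M →L[ℂ] M where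
  toLinearMap := T.toLinearMap.restrict h
  cont := Continuous.subtype_mk (T.continuous.comp continuous_subtype_val) _

open Finset Filter Topology ComplexConjugate
open scoped ENNReal InnerProductSpace

local notation "ℓ²" => lp (fun _ : ℕ => ℂ) 2

lemma lp.hasSum_conj_mul (b a : ℓ²) : HasSum (fun n => conj (b n) * a n) ⟪b, a⟫_ℂ := by
  simpa [mul_comm] using lp.hasSum_inner (𝕜 := ℂ) b a

lemma lp.summable_norm_sq (x : ℓ²) : Summable fun n => ‖x n‖ ^ 2 := by
  simpa using (lp.memℓp x).summable (by norm_num : 0 < (2 : ℝ≥0∞).toReal)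

lemma spectrum.subset_closedBall_norm_sub {𝕜 A : Type*} [NontriviallyNormedField 𝕜]
    [NormedRing A] [NormedAlgebra 𝕜 A] [CompleteSpace A] [NormOneClass A] (a : A) (c : 𝕜) :
    spectrum 𝕜 a ⊆ Metric.closedBall c ‖a - algebraMap 𝕜 A c‖ := fun z hz => by
  rw [Metric.mem_closedBall, dist_eq_norm]
  exact spectrum.norm_le_norm_of_mem (spectrum.sub_singleton_eq a c ▸ Set.sub_mem_sub hz rfl)

lemma norm_restrictOp_sub_one_le {X : Type*} [NormedAddCommGroup X] [NormedSpace ℂ X]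
    (T : X →L[ℂ] X) (M : Submodule ℂ X) (h : ∀ y ∈ M, T y ∈ M) :
    ‖restrictOp T M h - 1‖ ≤ ‖T - 1‖ :=
  ContinuousLinearMap.opNorm_le_bound _ (norm_nonneg _) fun m => (T - 1).le_opNorm m

/-- The right side minus the left side is `‖(n + 1) x - n y‖² / (n (n + 1)²)`. -/
lemma sq_norm_div_sub_sq_norm_div_le (n : ℕ) (x y : ℂ) (hx : n = 0 → x = 0) :
    ‖y‖ ^ 2 / (n + 1) - ‖x‖ ^ 2 / n ≤
      2 * (conj (y / (n + 1)) * (y - x)).re - ‖y / (n + 1)‖ ^ 2 := by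
  have hcast : (n + 1 : ℂ) = ((n + 1 : ℝ) : ℂ) := by push_cast; rfl
  rw [hcast, map_div₀, Complex.conj_ofReal, div_mul_eq_mul_div, Complex.div_ofReal_re, norm_div,
    Complex.norm_real, Real.norm_of_nonneg (by positivity), div_pow]
  simp only [Complex.sq_norm, Complex.normSq_apply, Complex.mul_re, Complex.conj_re,
    Complex.conj_im, Complex.sub_re, Complex.sub_im]
  rcases Nat.eq_zero_or_pos n with rfl | hn
  · simp [hx rfl]
    nlinarith
  · have hn : (0 : ℝ) < n := Nat.cast_pos.mpr hn
    rw [← sub_nonneg]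
    convert_to 0 ≤ (((n + 1) * x.re - n * y.re) ^ 2 + ((n + 1) * x.im - n * y.im) ^ 2) /
      (n * (n + 1) ^ 2)
    · field_simp
      ring
    · positivity

lemma hardy_partial_sum_nonneg (a : ℕ → ℂ) (N : ℕ) :
    0 ≤ ∑ n ∈ range N, (2 * (conj ((∑ k ∈ range (n + 1), a k) / (n + 1)) * a n).re
      - ‖(∑ k ∈ range (n + 1), a k) / (n + 1)‖ ^ 2) := by
  -- `f 0 = 0` because division by zero is zero
  set f : ℕ → ℝ := fun n => ‖∑ k ∈ range n, a k‖ ^ 2 / n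
  calc 0 ≤ f N := by positivity
    _ = ∑ n ∈ range N, (f (n + 1) - f n) := by rw [sum_range_sub]; simp [f]
    _ ≤ _ := sum_le_sum fun n _ => ?_
  have h := sq_norm_div_sub_sq_norm_div_le n (∑ k ∈ range n, a k) (∑ k ∈ range (n + 1), a k)
    (by rintro rfl; simp)
  simpa [f, sum_range_succ_sub_sum] using h

lemma IsCesaro.norm_apply_sub_self_le {C : ℓ² →L[ℂ] ℓ²} (hC : IsCesaro C) (a : ℓ²) :
    ‖C a - a‖ ≤ ‖a‖ := by
  have hsum : HasSum (fun n => 2 * (conj (C a n) * a n).re - ‖C a n‖ ^ 2)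
      (2 * (⟪C a, a⟫_ℂ).re - ‖C a‖ ^ 2) := by
    have hnorm : HasSum (fun n => ‖C a n‖ ^ 2) (‖C a‖ ^ 2) := by
      rw [norm_sq_eq_re_inner (𝕜 := ℂ), RCLike.re_to_complex]
      simpa only [Complex.conj_mul', ← Complex.ofReal_pow, Complex.ofReal_re] using
        Complex.hasSum_re (lp.hasSum_conj_mul (C a) (C a))
    exact ((Complex.hasSum_re (lp.hasSum_conj_mul (C a) a)).mul_left 2).sub hnorm
  have hnonneg : 0 ≤ 2 * (⟪C a, a⟫_ℂ).re - ‖C a‖ ^ 2 :=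
    ge_of_tendsto' hsum.tendsto_sum_nat fun N => by
      simpa only [hC a] using hardy_partial_sum_nonneg (fun n => a n) N
  have hsq : ‖C a - a‖ ^ 2 ≤ ‖a‖ ^ 2 := by
    rw [@norm_sub_sq ℂ, RCLike.re_to_complex]
    linarith
  exact (pow_le_pow_iff_left₀ (norm_nonneg _) (norm_nonneg _) two_ne_zero).mp hsq

lemma IsCesaro.norm_sub_one_le {C : ℓ² →L[ℂ] ℓ²} (hC : IsCesaro C) : ‖C - 1‖ ≤ 1 :=
  ContinuousLinearMap.opNorm_le_bound _ zero_le_one fun a => by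
    simpa using hC.norm_apply_sub_self_le a

lemma summable_nat_add_one_rpow_neg {s : ℝ} (hs : 1 < s) :
    Summable fun n : ℕ => ((n : ℝ) + 1) ^ (-s) := by
  have h := (summable_nat_add_iff 1).mpr (Real.summable_nat_rpow.mpr (neg_lt_neg hs))
  simpa using h

lemma norm_one_sub_div_sq_le {w : ℂ} {r δ x : ℝ} (hx : 0 < x) (hr : r ≤ w.re)
    (hw : ‖w‖ ^ 2 ≤ δ * x) : ‖1 - w / x‖ ^ 2 ≤ 1 - (2 * r - δ) / x := by
  rw [Complex.sq_norm, Complex.normSq_apply] at hw ⊢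
  simp only [Complex.sub_re, Complex.one_re, Complex.div_ofReal_re, Complex.sub_im,
    Complex.one_im, Complex.div_ofReal_im, zero_sub]
  have hre : 0 ≤ 2 * (w.re - r) / x := by have := sub_nonneg.mpr hr; positivity
  have him : 0 ≤ (δ * x - (w.re * w.re + w.im * w.im)) / x ^ 2 := by
    have := sub_nonneg.mpr hw; positivity
  calc _ = 1 - (2 * r - δ) / x - (2 * (w.re - r) / x
        + (δ * x - (w.re * w.re + w.im * w.im)) / x ^ 2) := by field_simp; ring
    _ ≤ _ := by linarith

lemma one_sub_div_mul_rpow_le {s x : ℝ} (hs : 1 ≤ s) (hx : 0 < x) :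
    (1 - s / x) * (x + 1) ^ s ≤ x ^ s := by
  have hx1 : 0 < x + 1 := by linarith
  have hbern : 1 - s / (x + 1) ≤ (x / (x + 1)) ^ s := by
    have h := one_add_mul_self_le_rpow_one_add (s := -1 / (x + 1)) (by
      rw [le_div_iff₀ hx1]; linarith) hs
    convert h using 1
    · ring
    · congr 1; field_simp; ring
  calc (1 - s / x) * (x + 1) ^ s ≤ (x / (x + 1)) ^ s * (x + 1) ^ s := by
        gcongr
        refine le_trans ?_ hbern
        gcongr
        linarith
    _ = x ^ s := by
        rw [Real.div_rpow hx.le hx1.le, div_mul_cancel₀ _ (Real.rpow_pos_of_pos hx1 s).ne']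

lemma one_half_lt_re_inv_of_mem_ball {z : ℂ} (hz : z ∈ Metric.ball (1 : ℂ) 1) :
    1 / 2 < (z⁻¹).re := by
  rw [Metric.mem_ball, Complex.dist_eq, ← sq_lt_one_iff₀ (norm_nonneg _), Complex.sq_norm,
    Complex.normSq_apply] at hz
  have hz0 : z ≠ 0 := by rintro rfl; norm_num at hz
  rw [Complex.inv_re, lt_div_iff₀ (Complex.normSq_pos.mpr hz0), Complex.normSq_apply]
  simp only [Complex.sub_re, Complex.one_re, Complex.sub_im, Complex.one_im, sub_zero] at hz
  nlinarith

noncomputable def cesaroEigenSeq (w : ℂ) (n : ℕ) : ℂ := ∏ j ∈ range n, (1 - w / (j + 1))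

lemma cesaroEigenSeq_succ (w : ℂ) (n : ℕ) :
    cesaroEigenSeq w (n + 1) = cesaroEigenSeq w n * (1 - w / (n + 1)) :=
  prod_range_succ _ _

lemma differentiable_cesaroEigenSeq (n : ℕ) : Differentiable ℂ fun w => cesaroEigenSeq w n := by
  unfold cesaroEigenSeq; fun_prop

lemma norm_cesaroEigenSeq_le_pow (w : ℂ) (n : ℕ) : ‖cesaroEigenSeq w n‖ ≤ (1 + ‖w‖) ^ n := by
  refine (Finset.norm_prod_le _ _).trans ?_
  calc ∏ j ∈ range n, ‖1 - w / (j + 1)‖ ≤ ∏ _j ∈ range n, (1 + ‖w‖) :=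
        prod_le_prod (fun _ _ => norm_nonneg _) fun j _ => (norm_sub_le _ _).trans (by
          rw [norm_one, norm_div]
          gcongr
          exact div_le_self (norm_nonneg _) (by norm_cast; simp))
    _ = (1 + ‖w‖) ^ n := by rw [prod_const, card_range]

lemma norm_cesaroEigenSeq_succ_sq_mul_rpow_le {w : ℂ} {r R : ℝ} (hr : 1 / 2 < r)
    (hwr : r ≤ w.re) (hwR : ‖w‖ ≤ R) {n : ℕ} (hn : R ^ 2 / (r - 1 / 2) ≤ n) :
    ‖cesaroEigenSeq w (n + 1)‖ ^ 2 * ((n : ℝ) + 1 + 1) ^ (r + 1 / 2) ≤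
      ‖cesaroEigenSeq w n‖ ^ 2 * ((n : ℝ) + 1) ^ (r + 1 / 2) := by
  have hx : (0 : ℝ) < n + 1 := by positivity
  have hw : ‖w‖ ^ 2 ≤ (r - 1 / 2) * ((n : ℝ) + 1) := by
    rw [div_le_iff₀ (by linarith)] at hn
    nlinarith [norm_nonneg w]
  have hfac : ‖1 - w / (n + 1)‖ ^ 2 ≤ 1 - (r + 1 / 2) / (n + 1) := by
    convert norm_one_sub_div_sq_le hx hwr hw using 3
    · push_cast; ring
    · ring
  calc ‖cesaroEigenSeq w (n + 1)‖ ^ 2 * ((n : ℝ) + 1 + 1) ^ (r + 1 / 2)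
      = ‖cesaroEigenSeq w n‖ ^ 2 * (‖1 - w / (n + 1)‖ ^ 2 * ((n : ℝ) + 1 + 1) ^ (r + 1 / 2)) := by
        rw [cesaroEigenSeq_succ, norm_mul, mul_pow, mul_assoc]
    _ ≤ ‖cesaroEigenSeq w n‖ ^ 2 *
          ((1 - (r + 1 / 2) / (n + 1)) * ((n : ℝ) + 1 + 1) ^ (r + 1 / 2)) := by
        gcongr
    _ ≤ ‖cesaroEigenSeq w n‖ ^ 2 * ((n : ℝ) + 1) ^ (r + 1 / 2) := by
        gcongr
        exact one_sub_div_mul_rpow_le (by linarith) hx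

/-- Past `N` the weighted sequence `‖e_w n‖² (n + 1)^(r + 1/2)` is nonincreasing, and up to `N`
the crude bound `norm_cesaroEigenSeq_le_pow` applies. -/
lemma exists_sq_norm_cesaroEigenSeq_le {r : ℝ} (hr : 1 / 2 < r) (R : ℝ) :
    ∃ B, ∀ w : ℂ, r ≤ w.re → ‖w‖ ≤ R → ∀ n : ℕ,
      ‖cesaroEigenSeq w n‖ ^ 2 ≤ B * ((n : ℝ) + 1) ^ (-(r + 1 / 2)) := by
  set N := ⌈R ^ 2 / (r - 1 / 2)⌉₊
  refine ⟨(1 + R) ^ (2 * N) * ((N : ℝ) + 1) ^ (r + 1 / 2), fun w hwr hwR n => ?_⟩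
  rw [Real.rpow_neg (by positivity), ← div_eq_mul_inv, le_div_iff₀ (by positivity)]
  have hR : 1 ≤ 1 + R := by linarith [norm_nonneg w]
  have hcrude : ∀ m ≤ N, ‖cesaroEigenSeq w m‖ ^ 2 * ((m : ℝ) + 1) ^ (r + 1 / 2) ≤
      (1 + R) ^ (2 * N) * ((N : ℝ) + 1) ^ (r + 1 / 2) := fun m hm => by
    gcongr ?_ * ?_
    · calc ‖cesaroEigenSeq w m‖ ^ 2 ≤ ((1 + R) ^ m) ^ 2 := by
            gcongr
            exact (norm_cesaroEigenSeq_le_pow w m).trans (by gcongr)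
        _ ≤ (1 + R) ^ (2 * N) := by
            rw [← pow_mul, mul_comm]
            exact pow_le_pow_right₀ hR (by omega)
    · gcongr
  rcases le_total n N with hn | hn
  · exact hcrude n hn
  · refine le_trans ?_ (hcrude N le_rfl)
    induction n, hn using Nat.le_induction with
    | base => rfl
    | succ n hn ih =>
      push_cast
      exact (norm_cesaroEigenSeq_succ_sq_mul_rpow_le hr hwr hwR
        ((Nat.le_ceil _).trans (by exact_mod_cast hn))).trans ih

lemma memℓp_cesaroEigenSeq {w : ℂ} (hw : 1 / 2 < w.re) : Memℓp (cesaroEigenSeq w) 2 := by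
  obtain ⟨B, hB⟩ := exists_sq_norm_cesaroEigenSeq_le hw ‖w‖
  refine memℓp_gen ?_
  simp only [ENNReal.toReal_ofNat, Real.rpow_two]
  exact .of_nonneg_of_le (fun _ => by positivity) (hB w le_rfl le_rfl)
    ((summable_nat_add_one_rpow_neg (s := w.re + 1 / 2) (by linarith)).mul_left B)

lemma tendsto_cesaroEigenSeq_atTop {w : ℂ} (hw : 1 / 2 < w.re) :
    Tendsto (cesaroEigenSeq w) atTop (𝓝 0) := by
  have h := ((memℓp_cesaroEigenSeq hw).summable
    (by norm_num : 0 < (2 : ℝ≥0∞).toReal)).tendsto_atTop_zero.sqrt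
  rw [tendsto_zero_iff_norm_tendsto_zero]
  simpa [Real.rpow_two, Real.sqrt_sq (norm_nonneg _)] using h

lemma differentiableOn_tsum_cesaroEigenSeq_mul (x : ℓ²) :
    DifferentiableOn ℂ (fun w => ∑' n, cesaroEigenSeq w n * x n) {w | 1 / 2 < w.re} := by
  intro w₀ hw₀
  have hw₀' : 1 / 2 < w₀.re := hw₀
  set r := (w₀.re + 1 / 2) / 2 with hr_def
  have hr : 1 / 2 < r := by linarith
  obtain ⟨B, hB⟩ := exists_sq_norm_cesaroEigenSeq_le hr (‖w₀‖ + 1)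
  set U := {w : ℂ | r < w.re ∧ ‖w‖ < ‖w₀‖ + 1}
  have hU : IsOpen U := (isOpen_lt continuous_const Complex.continuous_re).inter
    (isOpen_lt continuous_norm continuous_const)
  have hbound : ∀ n, ∀ w ∈ U, ‖cesaroEigenSeq w n * x n‖ ≤
      (B * ((n : ℝ) + 1) ^ (-(r + 1 / 2)) + ‖x n‖ ^ 2) / 2 := fun n w hw => by
    have he := hB w hw.1.le hw.2.le n
    rw [norm_mul]
    nlinarith [two_mul_le_add_sq ‖cesaroEigenSeq w n‖ ‖x n‖]
  have hsum : Summable fun n : ℕ => (B * ((n : ℝ) + 1) ^ (-(r + 1 / 2)) + ‖x n‖ ^ 2) / 2 :=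
    (((summable_nat_add_one_rpow_neg (by linarith)).mul_left B).add
      (lp.summable_norm_sq x)).div_const 2
  have hdiff := Complex.differentiableOn_tsum_of_summable_norm hsum
    (fun n => ((differentiable_cesaroEigenSeq n).mul_const (x n)).differentiableOn) hU hbound
  have hw₀U : w₀ ∈ U := ⟨by linarith, by linarith⟩
  exact (hdiff.differentiableAt (hU.mem_nhds hw₀U)).differentiableWithinAt

lemma cesaroEigenSeq_natCast_add_one_eq_zero {m n : ℕ} (h : m < n) :
    cesaroEigenSeq (m + 1) n = 0 :=
  prod_eq_zero (mem_range.mpr h) (by rw [div_self (Nat.cast_add_one_ne_zero m), sub_self])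

lemma cesaroEigenSeq_natCast_add_one_ne_zero {m n : ℕ} (h : n ≤ m) :
    cesaroEigenSeq (m + 1) n ≠ 0 :=
  prod_ne_zero_iff.mpr fun j hj => by
    rw [sub_ne_zero, ne_comm, ne_eq, div_eq_one_iff_eq (Nat.cast_add_one_ne_zero j)]
    norm_cast
    have := mem_range.mp hj
    omega

lemma eq_zero_of_tsum_cesaroEigenSeq_mul_eq_zero {x : ℕ → ℂ}
    (h : ∀ m : ℕ, ∑' n, cesaroEigenSeq (m + 1) n * x n = 0) : x = 0 := by
  funext n
  induction n using Nat.strong_induction_on with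
  | _ n ih =>
    have hn := h n
    rw [tsum_eq_sum (s := range (n + 1)) fun j hj => by
        rw [cesaroEigenSeq_natCast_add_one_eq_zero (by simpa using hj), zero_mul],
      sum_range_succ, sum_eq_zero fun j hj => by
        rw [ih j (mem_range.mp hj), Pi.zero_apply, mul_zero],
      zero_add] at hn
    exact (mul_eq_zero.mp hn).resolve_left (cesaroEigenSeq_natCast_add_one_ne_zero le_rfl)

noncomputable def cesaroEigenVec {w : ℂ} (hw : 1 / 2 < w.re) : ℓ² :=
  ⟨fun n => conj (cesaroEigenSeq w n), (memℓp_cesaroEigenSeq hw).star_mem⟩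

lemma hasSum_inner_cesaroEigenVec {w : ℂ} (hw : 1 / 2 < w.re) (x : ℓ²) :
    HasSum (fun n => cesaroEigenSeq w n * x n) ⟪cesaroEigenVec hw, x⟫_ℂ := by
  simpa [cesaroEigenVec] using lp.hasSum_conj_mul (cesaroEigenVec hw) x

lemma IsCesaro.apply_single {C : ℓ² →L[ℂ] ℓ²} (hC : IsCesaro C) (k : ℕ) (c : ℂ) (n : ℕ) :
    C (lp.single 2 k c) n = if k ≤ n then c / (n + 1) else 0 := by
  rw [hC]
  simp [lp.single_apply, Finset.sum_pi_single', ite_div]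

lemma IsCesaro.mul_inner_cesaroEigenVec_apply_single {C : ℓ² →L[ℂ] ℓ²} (hC : IsCesaro C) {w : ℂ}
    (hw : 1 / 2 < w.re) (k : ℕ) (c : ℂ) :
    w * ⟪cesaroEigenVec hw, C (lp.single 2 k c)⟫_ℂ = c * cesaroEigenSeq w k := by
  -- `w e_n / (n + 1) = e_n - e_(n+1)`, so the series telescopes; `f` freezes the index below `k`
  set f : ℕ → ℂ := fun n => cesaroEigenSeq w (max k n)
  have hterm : ∀ n, w * (cesaroEigenSeq w n * C (lp.single 2 k c) n) = c * (f n - f (n + 1)) := by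
    intro n
    rw [hC.apply_single]
    split_ifs with hkn
    · simp only [f, max_eq_right hkn, max_eq_right (hkn.trans n.le_succ), cesaroEigenSeq_succ]
      field_simp
      ring
    · simp [f, max_eq_left (not_le.mp hkn).le, max_eq_left (Nat.succ_le_of_lt (not_le.mp hkn))]
  have hsum := ((hasSum_inner_cesaroEigenVec hw (C (lp.single 2 k c))).mul_left w).tendsto_sum_nat
  simp only [hterm, ← mul_sum, sum_range_sub'] at hsum
  refine tendsto_nhds_unique hsum ?_
  have hf : Tendsto f atTop (𝓝 0) :=
    (tendsto_cesaroEigenSeq_atTop hw).comp (tendsto_atTop_atTop_of_monotone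
      (fun _ _ h => max_le_max le_rfl h) fun n => ⟨n, le_max_right _ _⟩)
  simpa [f] using (hf.const_sub (cesaroEigenSeq w k)).const_mul c

lemma IsCesaro.mul_inner_cesaroEigenVec_apply {C : ℓ² →L[ℂ] ℓ²} (hC : IsCesaro C) {w : ℂ}
    (hw : 1 / 2 < w.re) (x : ℓ²) :
    w * ⟪cesaroEigenVec hw, C x⟫_ℂ = ⟪cesaroEigenVec hw, x⟫_ℂ := by
  have h := (((innerSL ℂ (cesaroEigenVec hw)).comp C).hasSum
    (lp.hasSum_single ENNReal.ofNat_ne_top x)).mul_left w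
  simp only [ContinuousLinearMap.comp_apply, innerSL_apply_apply,
    hC.mul_inner_cesaroEigenVec_apply_single hw] at h
  exact h.unique (by simpa [mul_comm] using hasSum_inner_cesaroEigenVec hw x)

lemma IsCesaro.inner_cesaroEigenVec_eq_zero_of_inv_notMem_spectrum {C : ℓ² →L[ℂ] ℓ²}
    (hC : IsCesaro C) {M : Submodule ℂ ℓ²} [CompleteSpace M] (hMinv : ∀ x ∈ M, C x ∈ M) {w : ℂ}
    (hw : 1 / 2 < w.re) (hσ : w⁻¹ ∉ spectrum ℂ (restrictOp C M hMinv)) {x : ℓ²} (hx : x ∈ M) :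
    ⟪cesaroEigenVec hw, x⟫_ℂ = 0 := by
  obtain ⟨y, hy⟩ := (ContinuousLinearMap.isUnit_iff_bijective.mp
    (spectrum.notMem_iff.mp hσ)).surjective ⟨x, hx⟩
  have hxy : x = w⁻¹ • (y : ℓ²) - C y := by
    change ((⟨x, hx⟩ : M) : ℓ²) = _
    rw [← hy, Algebra.algebraMap_eq_smul_one]
    rfl
  have hw0 : w ≠ 0 := by rintro rfl; norm_num at hw
  rw [hxy, inner_sub_right, inner_smul_right, ← hC.mul_inner_cesaroEigenVec_apply hw,
    inv_mul_cancel_left₀ hw0, sub_self]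

lemma IsCesaro.ball_subset_spectrum_restrictOp {C : ℓ² →L[ℂ] ℓ²} (hC : IsCesaro C)
    {M : Submodule ℂ ℓ²} [CompleteSpace M] (hMbot : M ≠ ⊥) (hMinv : ∀ x ∈ M, C x ∈ M) :
    Metric.ball (1 : ℂ) 1 ⊆ spectrum ℂ (restrictOp C M hMinv) := by
  intro z hz
  by_contra hσ
  obtain ⟨x, hxM, hx0⟩ := Submodule.exists_mem_ne_zero_of_ne_bot hMbot
  set H := {w : ℂ | 1 / 2 < w.re}
  have hH : IsOpen H := isOpen_lt continuous_const Complex.continuous_re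
  have hH0 : H ⊆ {0}ᶜ := by rintro w hw rfl; norm_num [H] at hw
  have hresolvent : IsOpen (H ∩ (·⁻¹) ⁻¹' (spectrum ℂ (restrictOp C M hMinv))ᶜ) :=
    ((continuousOn_inv₀ : ContinuousOn (·⁻¹ : ℂ → ℂ) {0}ᶜ).mono hH0).isOpen_inter_preimage hH
      (spectrum.isClosed (𝕜 := ℂ) (restrictOp C M hMinv)).isOpen_compl
  have hzinv : z⁻¹ ∈ H ∩ (·⁻¹) ⁻¹' (spectrum ℂ (restrictOp C M hMinv))ᶜ :=
    ⟨one_half_lt_re_inv_of_mem_ball hz, by simpa using hσ⟩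
  have hanalytic := (differentiableOn_tsum_cesaroEigenSeq_mul x).analyticOnNhd hH
  have hvanish : Set.EqOn (fun w => ∑' n, cesaroEigenSeq w n * x n) 0 H :=
    hanalytic.eqOn_zero_of_preconnected_of_eventuallyEq_zero
      (convex_halfSpace_re_gt _).isPreconnected hzinv.1 <| by
        filter_upwards [hresolvent.mem_nhds hzinv] with w hw
        exact (hasSum_inner_cesaroEigenVec hw.1 x).tsum_eq.trans
          (hC.inner_cesaroEigenVec_eq_zero_of_inv_notMem_spectrum hMinv hw.1 hw.2 hxM)
  refine hx0 (lp.ext (eq_zero_of_tsum_cesaroEigenSeq_mul_eq_zero fun m => hvanish ?_))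
  show 1 / 2 < ((m : ℂ) + 1).re
  simp only [Complex.add_re, Complex.natCast_re, Complex.one_re]
  linarith [(m.cast_nonneg : (0 : ℝ) ≤ m)]

theorem stmt_17_general (C : lp (fun _ : ℕ => ℂ) 2 →L[ℂ] lp (fun _ : ℕ => ℂ) 2)
    (hC : IsCesaro C) (M : Submodule ℂ (lp (fun _ : ℕ => ℂ) 2))
    (hMclosed : IsClosed (M : Set (lp (fun _ : ℕ => ℂ) 2)))
    (hMbot : M ≠ ⊥)
    (hMinv : ∀ x ∈ M, C x ∈ M) :
    spectrum ℂ (restrictOp C M hMinv) = {z : ℂ | ‖z - 1‖ ≤ 1} := by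
  have := hMclosed.completeSpace_coe
  have := Submodule.nontrivial_iff_ne_bot.mpr hMbot
  have hdisc : {z : ℂ | ‖z - 1‖ ≤ 1} = Metric.closedBall 1 1 := by
    ext; simp [dist_eq_norm]
  rw [hdisc]
  refine subset_antisymm ?_ ?_
  · refine (spectrum.subset_closedBall_norm_sub (restrictOp C M hMinv) (1 : ℂ)).trans
      (Metric.closedBall_subset_closedBall ?_)
    rw [map_one]
    exact (norm_restrictOp_sub_one_le C M hMinv).trans hC.norm_sub_one_le
  · rw [← closure_ball (1 : ℂ) one_ne_zero]
    exact (spectrum.isClosed (𝕜 := ℂ) (restrictOp C M hMinv)).closure_subset_iff.mpr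
      (hC.ball_subset_spectrum_restrictOp hMbot hMinv)

/-- if `M` is a non-trivial closed invariant subspace of the Cesàro
operator on ℓ², then the spectrum of the restriction `C|_M` is the closed disc
`{z : |z - 1| ≤ 1}`. -/
theorem stmt_17 (C : lp (fun _ : ℕ => ℂ) 2 →L[ℂ] lp (fun _ : ℕ => ℂ) 2)
    (hC : IsCesaro C) (M : Submodule ℂ (lp (fun _ : ℕ => ℂ) 2))
    (hMclosed : IsClosed (M : Set (lp (fun _ : ℕ => ℂ) 2)))
    (hMbot : M ≠ ⊥) (hMtop : M ≠ ⊤)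
    (hMinv : ∀ x ∈ M, C x ∈ M) :
    spectrum ℂ (restrictOp C M hMinv) = {z : ℂ | ‖z - 1‖ ≤ 1} :=
  stmt_17_general C hC M hMclosed hMbot hMinv
end

section
/- The Hilbert-space adjoint C* of the Cesàro operator on ℓ²(ℕ, ℂ) does not have the single-valued extension property (SVEP): there exist a nonempty open set W ⊆ ℂ and an analytic function g : W → ℓ² with g(z) ≠ 0 and (C* − z·I) g(z) = 0 for all z ∈ W. -/
/-!
Since `(C* x)ₖ = ∑_{n ≥ k} xₙ / (n + 1)`, the eigenvalue equation `C* a = w⁻¹ a` telescopes to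
the recurrence `a (n + 1) = (1 - w / (n + 1)) a n`, solved by
`a n = ∏_{j < n} (1 - w / (j + 1))`, which decays like `n ^ (-Re w)`. For `w` in the disc
`‖w - 3‖ < 1` Raabe's test bounds it by one summable sequence, so `z ↦ ∑ₙ a n (z⁻¹) eₙ` is
holomorphic by the Weierstrass M-test, and it is nonzero because `a 0 = 1`.
-/

open Finset Metric

local notation "ℓ²" => lp (fun _ : ℕ => ℂ) 2

-- Raabe's test; telescoping `(c - 1) uₙ ≤ n uₙ - (n + 1) uₙ₊₁` bounds the partial sums.
theorem summable_of_succ_mul_le {u : ℕ → ℝ} {c : ℝ} (hc : 1 < c) (N : ℕ) (hu : ∀ n, 0 ≤ u n)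
    (h : ∀ n, N ≤ n → (n + 1) * u (n + 1) ≤ (n + 1 - c) * u n) : Summable u := by
  have telescope : ∀ M : ℕ, (c - 1) * ∑ m ∈ range M, u (m + N) + (M + N) * u (M + N)
      ≤ N * u N := by
    intro M
    induction M with
    | zero => simp
    | succ M ih =>
      have step := h (M + N) (Nat.le_add_left N M)
      rw [sum_range_succ, Nat.add_right_comm]
      push_cast at step ⊢
      linarith
  rw [← summable_nat_add_iff N]
  refine summable_of_sum_range_le (c := N * u N / (c - 1)) (fun m => hu _) fun M => ?_
  rw [le_div_iff₀' (by linarith)]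
  nlinarith [telescope M, hu (M + N)]

theorem summable_prod_abs_add_div {t δ : ℝ} (hδ : 0 ≤ δ) (htδ : 1 < t - δ) :
    Summable fun n : ℕ => ∏ j ∈ range n, (|(j : ℝ) + 1 - t| + δ) / (j + 1) := by
  refine summable_of_succ_mul_le htδ ⌈t⌉₊ (fun n => prod_nonneg fun j _ => by positivity)
    fun n hn => le_of_eq ?_
  have ht : t ≤ n := (Nat.le_ceil t).trans (by exact_mod_cast hn)
  rw [prod_range_succ, abs_of_nonneg (by linarith)]
  field_simp
  ring

noncomputable def cesaroEigenseq (w : ℂ) (n : ℕ) : ℂ :=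
  ∏ j ∈ range n, (1 - w / (j + 1))

theorem cesaroEigenseq_zero (w : ℂ) : cesaroEigenseq w 0 = 1 := prod_range_zero _

theorem mul_cesaroEigenseq_div (w : ℂ) (n : ℕ) :
    w * (cesaroEigenseq w n / (n + 1)) = cesaroEigenseq w n - cesaroEigenseq w (n + 1) := by
  simp only [cesaroEigenseq, prod_range_succ]
  ring

theorem norm_cesaroEigenseq_le {w : ℂ} {t δ : ℝ} (hw : ‖w - t‖ ≤ δ) (n : ℕ) :
    ‖cesaroEigenseq w n‖ ≤ ∏ j ∈ range n, (|(j : ℝ) + 1 - t| + δ) / (j + 1) := by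
  rw [cesaroEigenseq, norm_prod]
  refine prod_le_prod (fun j _ => norm_nonneg _) fun j _ => ?_
  have hj : (j : ℂ) + 1 ≠ 0 := by exact_mod_cast Nat.succ_ne_zero j
  have hfactor : 1 - w / (j + 1) = (((j + 1 - t : ℝ) : ℂ) + (t - w)) / (j + 1) := by
    field_simp
    push_cast
    ring
  rw [hfactor, norm_div, ← Complex.ofReal_natCast, ← Complex.ofReal_one, ← Complex.ofReal_add,
    Complex.norm_real, Real.norm_of_nonneg (by positivity)]
  gcongr
  refine (norm_add_le _ _).trans ?_
  rw [Complex.norm_real, Real.norm_eq_abs, norm_sub_rev]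
  gcongr

theorem summable_norm_cesaroEigenseq {w : ℂ} {t δ : ℝ} (hδ : 0 ≤ δ) (htδ : 1 < t - δ)
    (hw : ‖w - t‖ ≤ δ) : Summable fun n => ‖cesaroEigenseq w n‖ :=
  (summable_prod_abs_add_div hδ htδ).of_nonneg_of_le (fun _ => norm_nonneg _)
    (norm_cesaroEigenseq_le hw)

theorem hasSum_sub_succ {G : Type*} [AddCommGroup G] [TopologicalSpace G]
    [IsTopologicalAddGroup G] {f : ℕ → G} (hf : Summable f) :
    HasSum (fun n => f n - f (n + 1)) (f 0) := by
  have hshift := (hasSum_nat_add_iff' 1).mpr hf.hasSum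
  simpa using hf.hasSum.sub hshift

theorem hasSum_mul_cesaroEigenseq_div {w : ℂ} (hw : Summable (cesaroEigenseq w)) (k : ℕ) :
    HasSum (fun n => w * (cesaroEigenseq w (n + k) / ((n + k : ℕ) + 1)))
      (cesaroEigenseq w k) := by
  simp_rw [mul_cesaroEigenseq_div, Nat.add_right_comm _ k 1]
  simpa using hasSum_sub_succ ((summable_nat_add_iff k).mpr hw)

theorem IsCesaro.hasSum_adjoint_apply {C : ℓ² →L[ℂ] ℓ²} (hC : IsCesaro C) (x : ℓ²) (k : ℕ) :
    HasSum (fun n => x (n + k) / ((n + k : ℕ) + 1)) (C.adjoint x k) := by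
  have hCe : ∀ n, C (lp.single 2 k 1) n = if k ≤ n then (1 : ℂ) / (n + 1) else 0 := by
    intro n
    rw [hC, lp.coeFn_single, Finset.sum_pi_single']
    split_ifs <;> simp_all
  have hinner := (hasSum_nat_add_iff' k).mpr (lp.hasSum_inner (𝕜 := ℂ) (C (lp.single 2 k 1)) x)
  rw [← C.adjoint_inner_right, lp.inner_single_left, sum_eq_zero fun i hi => ?_, sub_zero]
    at hinner
  · simpa [hCe, RCLike.inner_apply, div_eq_mul_inv] using hinner
  · simp [hCe, mem_range.mp hi]

noncomputable def cesaroEigenvector (w : ℂ) : ℓ² :=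
  ∑' n, cesaroEigenseq w n • lp.single 2 n 1

theorem cesaroEigenvector_apply {w : ℂ} (hw : Summable fun n => ‖cesaroEigenseq w n‖)
    (n : ℕ) : cesaroEigenvector w n = cesaroEigenseq w n := by
  have hmem : Memℓp (cesaroEigenseq w) 2 :=
    (memℓp_gen (p := 1) (by simpa using hw)).of_exponent_ge (by norm_num)
  have hsum := lp.hasSum_single (by norm_num) (⟨_, hmem⟩ : ℓ²)
  have hterm : ∀ n, (lp.single 2 n (cesaroEigenseq w n) : ℓ²) =
      cesaroEigenseq w n • lp.single 2 n 1 := fun n => by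
    rw [← lp.single_smul, smul_eq_mul, mul_one]
  rw [cesaroEigenvector, ← funext hterm, hsum.tsum_eq]

theorem cesaroEigenvector_ne_zero {w : ℂ} (hw : Summable fun n => ‖cesaroEigenseq w n‖) :
    cesaroEigenvector w ≠ 0 := by
  intro h
  simpa [cesaroEigenseq_zero, h] using cesaroEigenvector_apply hw 0

theorem IsCesaro.adjoint_cesaroEigenvector {C : ℓ² →L[ℂ] ℓ²} (hC : IsCesaro C) {w : ℂ}
    (hw0 : w ≠ 0) (hw : Summable fun n => ‖cesaroEigenseq w n‖) :
    C.adjoint (cesaroEigenvector w) = w⁻¹ • cesaroEigenvector w := by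
  refine lp.ext (funext fun k => ?_)
  have hadj := (hC.hasSum_adjoint_apply (cesaroEigenvector w) k).mul_left w
  simp only [cesaroEigenvector_apply hw] at hadj
  have heq := hadj.unique (hasSum_mul_cesaroEigenseq_div hw.of_norm k)
  rw [lp.coeFn_smul, Pi.smul_apply, cesaroEigenvector_apply hw, ← heq, smul_eq_mul,
    inv_mul_cancel_left₀ hw0]

theorem differentiableOn_cesaroEigenvector_inv {U : Set ℂ} (hU : IsOpen U) {t δ : ℝ}
    (hδ : 0 ≤ δ) (htδ : 1 < t - δ) (hUt : ∀ z ∈ U, ‖z⁻¹ - t‖ ≤ δ) :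
    DifferentiableOn ℂ (fun z => cesaroEigenvector z⁻¹) U := by
  have hU0 : ∀ z ∈ U, z ≠ 0 := by
    rintro z hz rfl
    have := hUt 0 hz
    simp at this
    linarith [le_abs_self t]
  refine Complex.differentiableOn_tsum_of_summable_norm (summable_prod_abs_add_div hδ htδ)
    (fun n => ?_) hU fun n z hz => ?_
  · refine DifferentiableOn.smul_const ?_ _
    refine DifferentiableOn.fun_finsetProd fun j _ => ?_
    exact (differentiableOn_const 1).sub ((differentiableOn_inv.mono hU0).div_const _)
  · rw [norm_smul, lp.norm_single (by norm_num), norm_one, mul_one]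
    exact norm_cesaroEigenseq_le (hUt z hz) n

theorem isOpen_inv_preimage_ball {c : ℂ} {r : ℝ} (hr : r ≤ ‖c‖) :
    IsOpen ((·⁻¹) ⁻¹' ball c r) := by
  have h0 : ((·⁻¹) ⁻¹' ball c r : Set ℂ) = {0}ᶜ ∩ (·⁻¹) ⁻¹' ball c r := by
    refine (Set.inter_eq_right.mpr fun z hz => ?_).symm
    rintro rfl
    simp [mem_ball, dist_eq_norm] at hz
    linarith
  rw [h0]
  exact continuousOn_inv₀.isOpen_inter_preimage isOpen_compl_singleton isOpen_ball

/-- the Hilbert-space adjoint `C*` of the Cesàro operator on ℓ² does not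
have the single-valued extension property: there are a nonempty open `W ⊆ ℂ` and an
analytic `g : W → ℓ²` with `g z ≠ 0` and `(C* - z) g z = 0` on `W`. -/
theorem stmt_18 (C : lp (fun _ : ℕ => ℂ) 2 →L[ℂ] lp (fun _ : ℕ => ℂ) 2)
    (hC : IsCesaro C) :
    ∃ W : Set ℂ, W.Nonempty ∧ IsOpen W ∧
      ∃ g : ℂ → lp (fun _ : ℕ => ℂ) 2, DifferentiableOn ℂ g W ∧
        ∀ z ∈ W, g z ≠ 0 ∧ ContinuousLinearMap.adjoint C (g z) - z • g z = 0 := by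
  set W : Set ℂ := (·⁻¹) ⁻¹' ball (3 : ℂ) 1
  have hWopen : IsOpen W := isOpen_inv_preimage_ball (by simp)
  have hW : ∀ z ∈ W, ‖z⁻¹ - (3 : ℝ)‖ ≤ 1 := fun z hz => by
    simpa using (mem_ball_iff_norm.mp hz).le
  have hsum : ∀ z ∈ W, Summable fun n => ‖cesaroEigenseq z⁻¹ n‖ :=
    fun z hz => summable_norm_cesaroEigenseq zero_le_one (by norm_num) (hW z hz)
  refine ⟨W, ⟨3⁻¹, by simp [W]⟩, hWopen, fun z => cesaroEigenvector z⁻¹,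
    differentiableOn_cesaroEigenvector_inv hWopen zero_le_one (by norm_num) hW,
    fun z hz => ⟨cesaroEigenvector_ne_zero (hsum z hz), ?_⟩⟩
  have hz0 : z⁻¹ ≠ 0 := by
    intro h
    simp [W, h] at hz
  rw [hC.adjoint_cesaroEigenvector hz0 (hsum z hz), inv_inv, sub_self]
end
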